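/- arXiv:1701.03835 — 4 statements merged into one kernel-verified Lean document; each statement's English description precedes it below -/
import Mathlib

section
/- In the braid group, for a ≤ b and n ≥ 1, (Π_a^b Π_{a+1}^{b+1} ⋯ Π_{a+n}^{b+n})(Π_a^{a+n-1}) = Π_{b+1}^{b+n} (Π_a^b Π_{a+1}^{b+1} ⋯ Π_{a+n}^{b+n}), where Π_a^b = σ_b σ_{b-1} ⋯ σ_a. -/
/-- Braid relations among the generators `σ i` (braid group on sufficiently many strands). -/
def IsBraidGens {G : Type*} [Group G] (σ : ℕ → G) : Prop :=
  (∀ i j, 1 ≤ i → i + 1 < j → σ i * σ j = σ j * σ i) ∧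
  (∀ i, 1 ≤ i → σ i * σ (i + 1) * σ i = σ (i + 1) * σ i * σ (i + 1))

/-- `piProd σ a b = σ_b * σ_{b-1} * ⋯ * σ_a` (decreasing indices); identity if `a > b`. -/
def piProd {G : Type*} [Group G] (σ : ℕ → G) (a b : ℕ) : G :=
  (((List.range' a (b + 1 - a)).reverse).map σ).prod

/-- `chainPi σ a b n = Π_a^b Π_{a+1}^{b+1} ⋯ Π_{a+n}^{b+n}`. -/
def chainPi {G : Type*} [Group G] (σ : ℕ → G) (a b n : ℕ) : G :=
  ((List.range (n + 1)).map (fun j => piProd σ (a + j) (b + j))).prod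

section Aux

variable {G : Type*} [Group G] (σ : ℕ → G)

lemma piProd_empty {a b : ℕ} (h : b < a) : piProd σ a b = 1 := by
  unfold piProd
  have : b + 1 - a = 0 := by omega
  simp [this]

lemma piProd_top {a b : ℕ} (h : a ≤ b + 1) :
    piProd σ a (b + 1) = σ (b + 1) * piProd σ a b := by
  unfold piProd
  have h1 : b + 1 + 1 - a = (b + 1 - a) + 1 := by omega
  have h2 : a + 1 * (b + 1 - a) = b + 1 := by omega
  rw [h1, List.range'_concat, h2]
  simp

lemma piProd_bot {a b : ℕ} (h : a ≤ b) :
    piProd σ a b = piProd σ (a + 1) b * σ a := by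
  unfold piProd
  have h1 : b + 1 - a = (b + 1 - (a + 1)) + 1 := by omega
  rw [h1, List.range'_succ]
  simp

lemma commute_piProd {i a b : ℕ}
    (hc : ∀ j, a ≤ j → j ≤ b → Commute (σ i) (σ j)) :
    Commute (σ i) (piProd σ a b) := by
  unfold piProd
  apply Commute.list_prod_right
  intro x hx
  simp only [List.mem_map, List.mem_reverse, List.mem_range'_1] at hx
  obtain ⟨j, ⟨hj1, hj2⟩, rfl⟩ := hx
  exact hc j hj1 (by omega)

variable {σ} (h : IsBraidGens σ)
include h

lemma comm_small {i a b : ℕ} (hi : 1 ≤ i) (hia : i + 2 ≤ a) :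
    Commute (σ i) (piProd σ a b) :=
  commute_piProd σ fun j hj1 _ => h.1 i j hi (by omega)

lemma comm_big {i a b : ℕ} (ha : 1 ≤ a) (hbi : b + 2 ≤ i) :
    Commute (σ i) (piProd σ a b) :=
  commute_piProd σ fun j hj1 hj2 => ((h.1 j i (by omega) (by omega)).symm)

/-- `σ i * Π_a^b = Π_a^b * σ (i+1)` for `a ≤ i < b`. -/
lemma sigma_piProd {a i b : ℕ} (ha : 1 ≤ a) (hai : a ≤ i) (hib : i + 1 ≤ b) :
    σ i * piProd σ a b = piProd σ a b * σ (i + 1) := by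
  induction b, hib using Nat.le_induction with
  | base =>
    obtain ⟨j, rfl⟩ : ∃ j, i = j + 1 := ⟨i - 1, by omega⟩
    have e1 : piProd σ a (j + 1 + 1) = σ (j + 1 + 1) * piProd σ a (j + 1) :=
      piProd_top σ (by omega)
    have e2 : piProd σ a (j + 1) = σ (j + 1) * piProd σ a j :=
      piProd_top σ (by omega)
    have braid := h.2 (j + 1) (by omega)
    have comm : Commute (σ (j + 1 + 1)) (piProd σ a j) := comm_big h ha (by omega)
    calc σ (j + 1) * piProd σ a (j + 1 + 1)
        = σ (j + 1) * σ (j + 1 + 1) * σ (j + 1) * piProd σ a j := by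
          rw [e1, e2]; simp only [mul_assoc]
      _ = σ (j + 1 + 1) * σ (j + 1) * σ (j + 1 + 1) * piProd σ a j := by rw [braid]
      _ = σ (j + 1 + 1) * σ (j + 1) * (piProd σ a j * σ (j + 1 + 1)) := by
          rw [mul_assoc, comm.eq]
      _ = piProd σ a (j + 1 + 1) * σ (j + 1 + 1) := by
          rw [e1, e2]; simp only [mul_assoc]
  | succ b hb ih =>
    have e1 : piProd σ a (b + 1) = σ (b + 1) * piProd σ a b := piProd_top σ (by omega)
    have c : σ i * σ (b + 1) = σ (b + 1) * σ i := h.1 i (b + 1) (by omega) (by omega)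
    rw [e1, ← mul_assoc, c, mul_assoc, ih, ← mul_assoc]

/-- Auxiliary downward induction: `Π_c^b Π_a^{b+1} = Π_a^{b+1} Π_{c+1}^{b+1}` for `a ≤ c`. -/
lemma piProd_shift_aux {a b : ℕ} (ha : 1 ≤ a) (hab : a ≤ b) :
    ∀ d, d ≤ b + 1 - a →
      piProd σ (b + 1 - d) b * piProd σ a (b + 1) =
        piProd σ a (b + 1) * piProd σ (b + 2 - d) (b + 1) := by
  intro d
  induction d with
  | zero =>
    intro _
    rw [piProd_empty σ (a := b + 1 - 0) (b := b) (by omega),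
      piProd_empty σ (a := b + 2 - 0) (b := b + 1) (by omega), one_mul, mul_one]
  | succ d ihd =>
    intro hd
    have hc1 : b + 1 - (d + 1) + 1 = b + 1 - d := by omega
    have hc2 : b + 2 - (d + 1) = b + 1 - d := by omega
    have hc3 : b + 2 - d = b + 1 - d + 1 := by omega
    have e1 : piProd σ (b + 1 - (d + 1)) b =
        piProd σ (b + 1 - d) b * σ (b + 1 - (d + 1)) := by
      rw [piProd_bot σ (a := b + 1 - (d + 1)) (by omega), hc1]
    have eL : σ (b + 1 - (d + 1)) * piProd σ a (b + 1) =
        piProd σ a (b + 1) * σ (b + 1 - (d + 1) + 1) :=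
      sigma_piProd h ha (by omega) (by omega)
    have e2 : piProd σ (b + 1 - d) (b + 1) =
        piProd σ (b + 1 - d + 1) (b + 1) * σ (b + 1 - d) := by
      rw [piProd_bot σ (a := b + 1 - d) (by omega)]
    rw [e1, mul_assoc, eL, ← mul_assoc, ihd (by omega), mul_assoc, hc1, hc2, e2, hc3]

/-- `Π_a^b Π_a^{b+1} = Π_a^{b+1} Π_{a+1}^{b+1}`. -/
lemma piProd_shift {a b : ℕ} (ha : 1 ≤ a) (hab : a ≤ b) :
    piProd σ a b * piProd σ a (b + 1) = piProd σ a (b + 1) * piProd σ (a + 1) (b + 1) := by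
  have := piProd_shift_aux h ha hab (b + 1 - a) le_rfl
  have h1 : b + 1 - (b + 1 - a) = a := by omega
  have h2 : b + 2 - (b + 1 - a) = a + 1 := by omega
  rwa [h1, h2] at this

/-- Moving a single generator through the chain. -/
lemma chain_sigma {a b n k : ℕ} (ha : 1 ≤ a) (hab : a ≤ b) (hk : k < n) :
    chainPi σ a b n * σ (a + k) = σ (b + k + 1) * chainPi σ a b n := by
  have hsplit : List.range (n + 1) =
      List.range k ++ (k :: (k + 1) :: List.range' (k + 2) (n - 1 - k)) := by
    rw [List.range_eq_range', List.range_eq_range']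
    have := List.range'_append (s := 0) (m := k) (n := n + 1 - k) (step := 1)
    simp only [Nat.zero_add, Nat.one_mul] at this
    rw [show n + 1 = k + (n + 1 - k) by omega, ← this]
    congr 1
    rw [show n + 1 - k = (n - 1 - k) + 1 + 1 by omega, List.range'_succ, List.range'_succ]
  set f : ℕ → G := fun j => piProd σ (a + j) (b + j) with hf
  have hC : chainPi σ a b n =
      ((List.range k).map f).prod * (f k * (f (k + 1) *
        ((List.range' (k + 2) (n - 1 - k)).map f).prod)) := by
    rw [chainPi, hsplit, List.map_append, List.prod_append, List.map_cons, List.map_cons,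
      List.prod_cons, List.prod_cons]
  set P₁ : G := ((List.range k).map f).prod with hP₁
  set P₂ : G := ((List.range' (k + 2) (n - 1 - k)).map f).prod with hP₂
  have c1 : Commute (σ (a + k)) P₂ := by
    rw [hP₂]
    apply Commute.list_prod_right
    intro x hx
    simp only [List.mem_map, List.mem_range'_1] at hx
    obtain ⟨j, ⟨hj1, _⟩, rfl⟩ := hx
    exact comm_small h (by omega) (by omega)
  have c2 : Commute (σ (b + k + 1)) P₁ := by
    rw [hP₁]
    apply Commute.list_prod_right
    intro x hx
    simp only [List.mem_map, List.mem_range] at hx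
    obtain ⟨j, hj, rfl⟩ := hx
    exact comm_big h (by omega) (by omega)
  have e1 : f (k + 1) * σ (a + k) = piProd σ (a + k) (b + k + 1) := by
    rw [hf]
    simp only []
    rw [piProd_bot σ (a := a + k) (b := b + k + 1) (by omega)]
    congr 1
  have e2 : f k * piProd σ (a + k) (b + k + 1) =
      piProd σ (a + k) (b + k + 1) * f (k + 1) := by
    have := piProd_shift h (a := a + k) (b := b + k) (by omega) (by omega)
    simpa [hf, show a + (k + 1) = a + k + 1 by omega,
      show b + (k + 1) = b + k + 1 by omega] using this
  have e3 : piProd σ (a + k) (b + k + 1) = σ (b + k + 1) * f k := by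
    rw [hf]
    simp only []
    exact piProd_top σ (by omega)
  calc chainPi σ a b n * σ (a + k)
      = P₁ * (f k * (f (k + 1) * (P₂ * σ (a + k)))) := by rw [hC]; simp only [mul_assoc]
    _ = P₁ * (f k * (f (k + 1) * (σ (a + k) * P₂))) := by rw [c1.eq]
    _ = P₁ * (f k * (piProd σ (a + k) (b + k + 1) * P₂)) := by rw [← mul_assoc (f (k + 1)), e1]
    _ = P₁ * (piProd σ (a + k) (b + k + 1) * (f (k + 1) * P₂)) := by
        rw [← mul_assoc (f k), e2, mul_assoc]
    _ = P₁ * (σ (b + k + 1) * (f k * (f (k + 1) * P₂))) := by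
        rw [e3]; simp only [mul_assoc]
    _ = σ (b + k + 1) * (P₁ * (f k * (f (k + 1) * P₂))) := by
        rw [← mul_assoc, ← c2.eq, mul_assoc]
    _ = σ (b + k + 1) * chainPi σ a b n := by rw [hC]

lemma chain_piProd {a b n : ℕ} (ha : 1 ≤ a) (hab : a ≤ b) :
    ∀ m s, s + m ≤ n →
      chainPi σ a b n * piProd σ (a + s) (a + s + m - 1) =
        piProd σ (b + 1 + s) (b + s + m) * chainPi σ a b n := by
  intro m
  induction m with
  | zero =>
    intro s _
    rw [piProd_empty σ (a := a + s) (b := a + s + 0 - 1) (by omega),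
      piProd_empty σ (a := b + 1 + s) (b := b + s + 0) (by omega), one_mul, mul_one]
  | succ m ihm =>
    intro s hs
    have e1 : piProd σ (a + s) (a + s + (m + 1) - 1) =
        piProd σ (a + (s + 1)) (a + (s + 1) + m - 1) * σ (a + s) := by
      rw [show a + s + (m + 1) - 1 = a + s + m by omega,
        piProd_bot σ (a := a + s) (by omega)]
      congr 2
      omega
    have e2 : piProd σ (b + 1 + s) (b + s + (m + 1)) =
        piProd σ (b + 1 + (s + 1)) (b + (s + 1) + m) * σ (b + 1 + s) := by
      rw [piProd_bot σ (a := b + 1 + s) (by omega)]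
      congr 2 <;> omega
    have hσ : chainPi σ a b n * σ (a + s) = σ (b + 1 + s) * chainPi σ a b n := by
      have := chain_sigma h ha hab (k := s) (n := n) (by omega)
      rwa [show b + s + 1 = b + 1 + s by omega] at this
    rw [e1, e2, ← mul_assoc, ihm (s + 1) (by omega), mul_assoc, hσ, ← mul_assoc]

end Aux

/-- For `a ≤ b` and `n ≥ 1`,
`(Π_a^b ⋯ Π_{a+n}^{b+n})(Π_a^{a+n-1}) = Π_{b+1}^{b+n} (Π_a^b ⋯ Π_{a+n}^{b+n})`. -/
theorem stmt2 {G : Type*} [Group G] (σ : ℕ → G) (h : IsBraidGens σ)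
    (a b n : ℕ) (ha : 1 ≤ a) (hab : a ≤ b) (hn : 1 ≤ n) :
    chainPi σ a b n * piProd σ a (a + n - 1) =
      piProd σ (b + 1) (b + n) * chainPi σ a b n := by
  have := chain_piProd h ha hab (n := n) n 0 (by omega)
  simpa using this
end

section
/- In the braid group B_q, the q-th power of the full cycle equals a product of block twists: (Π_1^{q-1})^q = (Π_1^r Π_2^{r+1} ⋯ Π_{q-r}^{q-1})(Π_1^{q-r} Π_2^{q-r+1} ⋯ Π_r^{q-1})(Π_{r+1}^{q-1})^{q-r} (Π_1^{r-1})^r, for any 1 ≤ r < q. -/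
/-- The generators `σ 1, …, σ (q-1)` of the braid group `B_q`:
far-apart generators commute and adjacent generators satisfy the braid relation. -/
def IsBraidGensUpTo {G : Type*} [Group G] (q : ℕ) (σ : ℕ → G) : Prop :=
  (∀ i j, 1 ≤ i → i + 1 < j → j + 1 ≤ q → σ i * σ j = σ j * σ i) ∧
  (∀ i, 1 ≤ i → i + 2 ≤ q → σ i * σ (i + 1) * σ i = σ (i + 1) * σ i * σ (i + 1))

/-- `blockA σ q r = Π_1^r Π_2^{r+1} ⋯ Π_{q-r}^{q-1}`. -/
def blockA {G : Type*} [Group G] (σ : ℕ → G) (q r : ℕ) : G :=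
  ((List.range (q - r)).map (fun j => piProd σ (j + 1) (r + j))).prod

/-- `blockB σ q r = Π_1^{q-r} Π_2^{q-r+1} ⋯ Π_r^{q-1}`. -/
def blockB {G : Type*} [Group G] (σ : ℕ → G) (q r : ℕ) : G :=
  ((List.range r).map (fun j => piProd σ (j + 1) (q - r + j))).prod

namespace BraidAux

variable {G : Type*} [Group G]

/-- increasing product σ_a σ_{a+1} ⋯ σ_b -/
def UP (σ : ℕ → G) (a b : ℕ) : G := ((List.range' a (b + 1 - a)).map σ).prod

/-- `Gp σ m k = Π_1^m Π_2^{m+1} ⋯ Π_k^{m+k-1}` -/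
def Gp (σ : ℕ → G) (m k : ℕ) : G :=
  ((List.range k).map (fun j => piProd σ (j + 1) (m + j))).prod

variable (σ : ℕ → G)

lemma piProd_empty {a b : ℕ} (hba : b < a) : piProd σ a b = 1 := by
  unfold piProd
  have : b + 1 - a = 0 := by omega
  simp [this]

lemma piProd_single (a : ℕ) : piProd σ a a = σ a := by
  unfold piProd
  have : a + 1 - a = 1 := by omega
  simp [this]

lemma piProd_top {a b : ℕ} (hab : a ≤ b + 1) : piProd σ a (b + 1) = σ (b + 1) * piProd σ a b := by
  unfold piProd
  have h1 : b + 1 + 1 - a = (b + 1 - a) + 1 := by omega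
  rw [h1, List.range'_concat]
  have h2 : a + 1 * (b + 1 - a) = b + 1 := by omega
  simp only [List.reverse_append, List.reverse_cons, List.reverse_nil, List.nil_append,
    List.singleton_append, List.map_cons, List.prod_cons, h2]

lemma piProd_bot {a b : ℕ} (hab : a ≤ b) : piProd σ a b = piProd σ (a + 1) b * σ a := by
  unfold piProd
  have h1 : b + 1 - a = (b + 1 - (a + 1)) + 1 := by omega
  rw [h1, List.range'_succ]
  simp

lemma piProd_split {a c b : ℕ} (h1 : a ≤ c + 1) (h2 : c ≤ b) :
    piProd σ a b = piProd σ (c + 1) b * piProd σ a c := by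
  unfold piProd
  have h3 : b + 1 - a = (b + 1 - (c + 1)) + (c + 1 - a) := by omega
  rw [h3, Nat.add_comm (b + 1 - (c + 1)) (c + 1 - a), ← List.range'_append_1]
  have h4 : a + (c + 1 - a) = c + 1 := by omega
  rw [h4, List.reverse_append]
  simp

lemma UP_zero : UP σ 1 0 = 1 := by simp [UP]

lemma UP_succ (k : ℕ) : UP σ 1 (k + 1) = UP σ 1 k * σ (k + 1) := by
  unfold UP
  have h1 : k + 1 + 1 - 1 = (k + 1 - 1) + 1 := by omega
  rw [h1, List.range'_concat]
  have h2 : 1 + 1 * (k + 1 - 1) = k + 1 := by omega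
  simp only [List.map_append, List.prod_append, h2]
  simp

lemma Gp_zero (m : ℕ) : Gp σ m 0 = 1 := by simp [Gp]

lemma Gp_succ (m k : ℕ) : Gp σ m (k + 1) = Gp σ m k * piProd σ (k + 1) (m + k) := by
  unfold Gp
  rw [List.range_succ]
  simp

lemma Gp_one_eq_UP (k : ℕ) : Gp σ 1 k = UP σ 1 k := by
  induction k with
  | zero => simp [Gp_zero, UP_zero]
  | succ k ih =>
      rw [Gp_succ, UP_succ, ih]
      congr 1
      have : (1 : ℕ) + k = k + 1 := by omega
      rw [this, piProd_single]

/-- generic commuting through a reversed-range product -/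
lemma comm_prod_rev (x : G) :
    ∀ (n a : ℕ), (∀ j, a ≤ j → j < a + n → x * σ j = σ j * x) →
      x * (((List.range' a n).reverse).map σ).prod
        = (((List.range' a n).reverse).map σ).prod * x := by
  intro n
  induction n with
  | zero => intro a _; simp
  | succ n ih =>
      intro a hcomm
      rw [List.range'_succ]
      simp only [List.reverse_cons, List.map_append, List.prod_append]
      have h1 := ih (a + 1) (fun j hj hj2 => hcomm j (by omega) (by omega))
      rw [← mul_assoc, h1, mul_assoc, mul_assoc]
      congr 1
      simp [hcomm a (le_refl a) (by omega)]

lemma comm_prod_fwd (x : G) :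
    ∀ (n a : ℕ), (∀ j, a ≤ j → j < a + n → x * σ j = σ j * x) →
      x * ((List.range' a n).map σ).prod = ((List.range' a n).map σ).prod * x := by
  intro n
  induction n with
  | zero => intro a _; simp
  | succ n ih =>
      intro a hcomm
      rw [List.range'_succ]
      simp only [List.map_cons, List.prod_cons]
      rw [← mul_assoc, hcomm a (le_refl a) (by omega), mul_assoc,
        ih (a + 1) (fun j hj hj2 => hcomm j (by omega) (by omega)), mul_assoc]

lemma comm_piProd (x : G) {a b : ℕ}
    (hcomm : ∀ j, a ≤ j → j ≤ b → x * σ j = σ j * x) :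
    x * piProd σ a b = piProd σ a b * x := by
  unfold piProd
  exact comm_prod_rev σ x _ a (fun j hj hj2 => hcomm j hj (by omega))




end BraidAux

namespace BraidAux
variable {G : Type*} [Group G] {σ : ℕ → G} {q : ℕ} (h : IsBraidGensUpTo q σ)
include h

/-- low generator commutes past a higher block -/
lemma commLo {i a b : ℕ} (hi : 1 ≤ i) (hia : i + 2 ≤ a) (hbq : b + 1 ≤ q) :
    σ i * piProd σ a b = piProd σ a b * σ i := by
  refine comm_piProd σ _ (fun j hj hj2 => ?_)
  exact h.1 i j hi (by omega) (by omega)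

/-- high generator commutes past a lower block -/
lemma commHi {i a b : ℕ} (ha : 1 ≤ a) (hbi : b + 2 ≤ i) (hiq : i + 1 ≤ q) :
    σ i * piProd σ a b = piProd σ a b * σ i := by
  refine comm_piProd σ _ (fun j hj hj2 => ?_)
  exact (h.1 j i (by omega) (by omega) (by omega)).symm

/-- shift lemma: σ_i Π_a^b = Π_a^b σ_{i+1} for a ≤ i < b -/
lemma F1 {i a b : ℕ} (ha : 1 ≤ a) (hai : a ≤ i) (hib : i + 1 ≤ b) (hbq : b + 1 ≤ q) :
    σ i * piProd σ a b = piProd σ a b * σ (i + 1) := by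
  induction b, hib using Nat.le_induction with
  | base =>
      obtain ⟨j, rfl⟩ : ∃ j, i = j + 1 := ⟨i - 1, by omega⟩
      have e1 : piProd σ a (j+1+1) = σ (j+1+1) * (σ (j+1) * piProd σ a j) := by
        rw [piProd_top σ (by omega), piProd_top σ (by omega)]
      calc σ (j+1) * piProd σ a (j+1+1)
          = (σ (j+1) * σ (j+1+1) * σ (j+1)) * piProd σ a j := by rw [e1]; group
        _ = (σ (j+1+1) * σ (j+1) * σ (j+1+1)) * piProd σ a j := by
            rw [h.2 (j+1) (by omega) (by omega)]
        _ = σ (j+1+1) * σ (j+1) * (σ (j+1+1) * piProd σ a j) := by group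
        _ = σ (j+1+1) * σ (j+1) * (piProd σ a j * σ (j+1+1)) := by
            rw [commHi h (by omega) (by omega) (by omega)]
        _ = piProd σ a (j+1+1) * σ (j+1+1) := by rw [e1]; group
  | succ b hb ih =>
      calc σ i * piProd σ a (b+1)
          = σ i * σ (b+1) * piProd σ a b := by rw [piProd_top σ (by omega)]; group
        _ = σ (b+1) * (σ i * piProd σ a b) := by
            rw [h.1 i (b+1) (by omega) (by omega) (by omega)]; group
        _ = σ (b+1) * (piProd σ a b * σ (i+1)) := by rw [ih (by omega)]
        _ = piProd σ a (b+1) * σ (i+1) := by rw [piProd_top σ (by omega)]; group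

/-- sliding lemma: Π_c^d Π_a^b = Π_a^b Π_{c+1}^{d+1} for a ≤ c, d < b -/
lemma Slem {a b : ℕ} (ha : 1 ≤ a) (hbq : b + 1 ≤ q) :
    ∀ d c, a ≤ c → d + 1 ≤ b →
      piProd σ c d * piProd σ a b = piProd σ a b * piProd σ (c+1) (d+1) := by
  intro d
  induction d with
  | zero =>
      intro c hac _
      rw [piProd_empty σ (show (0:ℕ) < c by omega),
        piProd_empty σ (show (1:ℕ) < c + 1 by omega), one_mul, mul_one]
  | succ e ih =>
      intro c hac heb
      by_cases hce : c ≤ e + 1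
      · calc piProd σ c (e+1) * piProd σ a b
            = σ (e+1) * (piProd σ c e * piProd σ a b) := by
              rw [piProd_top σ (by omega)]; group
          _ = σ (e+1) * (piProd σ a b * piProd σ (c+1) (e+1)) := by
              rw [ih c hac (by omega)]
          _ = (σ (e+1) * piProd σ a b) * piProd σ (c+1) (e+1) := by group
          _ = piProd σ a b * σ (e+1+1) * piProd σ (c+1) (e+1) := by
              rw [F1 h (by omega) (by omega) (by omega) (by omega)]
          _ = piProd σ a b * piProd σ (c+1) (e+1+1) := by
              rw [piProd_top σ (show c + 1 ≤ e + 1 + 1 by omega)]; group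
      · rw [piProd_empty σ (a := c) (b := e+1) (by omega),
          piProd_empty σ (a := c+1) (b := e+1+1) (by omega), one_mul, mul_one]

/-- key lemma K: σ_{b+1} Π_a^b Π_{a+1}^{b+1} = Π_a^b Π_{a+1}^{b+1} σ_a -/
lemma Klem : ∀ n a b, 1 ≤ a → b = a + n → b + 2 ≤ q →
    σ (b + 1) * (piProd σ a b * piProd σ (a+1) (b + 1))
      = piProd σ a b * piProd σ (a+1) (b + 1) * σ a := by
  intro n
  induction n with
  | zero =>
      intro a b ha hb haq
      have hb' : b = a := by omega
      subst hb'
      rw [piProd_single, piProd_single]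
      calc σ (b+1) * (σ b * σ (b+1)) = σ b * σ (b+1) * σ b := by
            rw [← mul_assoc, h.2 b (by omega) (by omega)]; done
        _ = _ := rfl
  | succ n ih =>
      intro a b ha hb haq
      have hab : a + 1 ≤ b := by omega
      have e1 : piProd σ a b = piProd σ (a+1) b * σ a := piProd_bot σ (by omega)
      have e2 : piProd σ (a+1) (b+1) = piProd σ (a+2) (b+1) * σ (a+1) := by
        rw [piProd_bot σ (show a + 1 ≤ b + 1 by omega)]
      rw [e1, e2]
      set P1 := piProd σ (a+1) b with hP1
      set P2 := piProd σ (a+2) (b+1) with hP2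
      have hcomm : σ a * P2 = P2 * σ a := commLo h (by omega) (by omega) (by omega)
      have ihh : σ (b+1) * (P1 * P2) = P1 * P2 * σ (a+1) := by
        have := ih (a+1) b (by omega) (by omega) (by omega)
        rw [show a + 1 + 1 = a + 2 from rfl] at this
        rw [hP1, hP2]
        exact this
      calc σ (b+1) * (P1 * σ a * (P2 * σ (a+1)))
          = σ (b+1) * (P1 * (σ a * P2) * σ (a+1)) := by group
        _ = σ (b+1) * (P1 * (P2 * σ a) * σ (a+1)) := by rw [hcomm]
        _ = (σ (b+1) * (P1 * P2)) * (σ a * σ (a+1)) := by group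
        _ = (P1 * P2 * σ (a+1)) * (σ a * σ (a+1)) := by rw [ihh]
        _ = P1 * P2 * (σ (a+1) * σ a * σ (a+1)) := by group
        _ = P1 * P2 * (σ a * σ (a+1) * σ a) := by rw [← h.2 a ha (by omega)]
        _ = P1 * (P2 * σ a) * (σ (a+1) * σ a) := by group
        _ = P1 * (σ a * P2) * (σ (a+1) * σ a) := by rw [hcomm]
        _ = P1 * σ a * (P2 * σ (a+1)) * σ a := by group

end BraidAux

namespace BraidAux
variable {G : Type*} [Group G] {σ : ℕ → G} {q : ℕ}

lemma conj_pow {x p y : G} (hxy : x * p = p * y) (n : ℕ) : x ^ n * p = p * y ^ n := by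
  induction n with
  | zero => simp
  | succ n ih =>
      rw [pow_succ, pow_succ, mul_assoc, hxy, ← mul_assoc, ih, mul_assoc]

lemma mono {p : ℕ} (hp : p ≤ q) (h : IsBraidGensUpTo q σ) : IsBraidGensUpTo p σ :=
  ⟨fun i j h1 h2 h3 => h.1 i j h1 h2 (by omega), fun i h1 h2 => h.2 i h1 (by omega)⟩

variable (h : IsBraidGensUpTo q σ)
include h

lemma CAlow : ∀ k {j m : ℕ}, 1 ≤ j → j + 1 ≤ m → m + k ≤ q →
    σ j * Gp σ m k = Gp σ m k * σ (j + k) := by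
  intro k
  induction k with
  | zero => intro j m hj hjm hmq; simp [Gp_zero]
  | succ k ih =>
      intro j m hj hjm hmq
      calc σ j * Gp σ m (k+1)
          = σ j * Gp σ m k * piProd σ (k+1) (m+k) := by rw [Gp_succ]; group
        _ = Gp σ m k * (σ (j+k) * piProd σ (k+1) (m+k)) := by
            rw [ih (by omega) (by omega) (by omega)]; group
        _ = Gp σ m k * (piProd σ (k+1) (m+k) * σ (j+k+1)) := by
            rw [F1 h (by omega) (by omega) (by omega) (by omega)]
        _ = Gp σ m (k+1) * σ (j + (k+1)) := by
            rw [Gp_succ, show j + (k+1) = j + k + 1 from by omega]; group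

lemma CAword : ∀ t {m k' : ℕ}, t + 1 ≤ m → m + k' ≤ q →
    piProd σ 1 t * Gp σ m k' = Gp σ m k' * piProd σ (k'+1) (t + k') := by
  intro t
  induction t with
  | zero =>
      intro m k' _ _
      rw [piProd_empty σ (show (0:ℕ) < 1 by omega),
        piProd_empty σ (a := k'+1) (b := 0 + k') (by omega), one_mul, mul_one]
  | succ t ih =>
      intro m k' htm hmq
      calc piProd σ 1 (t+1) * Gp σ m k'
          = σ (t+1) * (piProd σ 1 t * Gp σ m k') := by
            rw [piProd_top σ (by omega)]; group
        _ = σ (t+1) * (Gp σ m k' * piProd σ (k'+1) (t + k')) := by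
            rw [ih (by omega) (by omega)]
        _ = (σ (t+1) * Gp σ m k') * piProd σ (k'+1) (t + k') := by group
        _ = (Gp σ m k' * σ (t+1+k')) * piProd σ (k'+1) (t + k') := by
            rw [CAlow h k' (by omega) (by omega) (by omega)]
        _ = Gp σ m k' * piProd σ (k'+1) (t+1+k') := by
            rw [show t+1+k' = t+k'+1 from by omega,
              piProd_top σ (show k' + 1 ≤ t + k' + 1 by omega)]
            group

lemma commU : ∀ k {a b : ℕ}, k + 2 ≤ a → 1 ≤ a → b + 1 ≤ q →
    UP σ 1 k * piProd σ a b = piProd σ a b * UP σ 1 k := by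
  intro k
  induction k with
  | zero => intro a b _ _ _; rw [UP_zero, one_mul, mul_one]
  | succ k ih =>
      intro a b hka ha hbq
      calc UP σ 1 (k+1) * piProd σ a b
          = UP σ 1 k * (σ (k+1) * piProd σ a b) := by rw [UP_succ]; group
        _ = UP σ 1 k * (piProd σ a b * σ (k+1)) := by
            rw [commLo h (by omega) (by omega) (by omega)]
        _ = (UP σ 1 k * piProd σ a b) * σ (k+1) := by group
        _ = piProd σ a b * UP σ 1 (k+1) := by
            rw [ih (by omega) (by omega) (by omega), UP_succ]; group

lemma XYU : ∀ k m, 1 ≤ m → m + k + 1 ≤ q →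
    Gp σ (m+1) k * piProd σ (k+1) (m+k) = Gp σ m (k+1) * UP σ 1 k := by
  intro k
  induction k with
  | zero =>
      intro m hm hq'
      simp [Gp_zero, UP_zero, Gp_succ]
  | succ k ih =>
      intro m hm hq'
      have hK : σ (m+k+1) * (piProd σ (k+1) (m+k) * piProd σ (k+2) (m+k+1))
          = piProd σ (k+1) (m+k) * piProd σ (k+2) (m+k+1) * σ (k+1) := by
        have := Klem h (m-1) (k+1) (m+k) (by omega) (by omega) (by omega)
        rw [show k+1+1 = k+2 from rfl] at this
        exact this
      calc Gp σ (m+1) (k+1) * piProd σ (k+2) (m+(k+1))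
          = Gp σ (m+1) k * (piProd σ (k+1) (m+1+k) * piProd σ (k+2) (m+k+1)) := by
            rw [Gp_succ, show m+(k+1) = m+k+1 from by omega]; group
        _ = Gp σ (m+1) k * (σ (m+k+1) * (piProd σ (k+1) (m+k) * piProd σ (k+2) (m+k+1))) := by
            rw [show m+1+k = m+k+1 from by omega,
              piProd_top σ (show k + 1 ≤ m + k + 1 by omega)]
            group
        _ = (Gp σ (m+1) k * piProd σ (k+1) (m+k)) * piProd σ (k+2) (m+k+1) * σ (k+1) := by
            rw [hK]; group
        _ = Gp σ m (k+1) * (UP σ 1 k * piProd σ (k+2) (m+k+1)) * σ (k+1) := by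
            rw [ih m hm (by omega)]; group
        _ = Gp σ m (k+1) * (piProd σ (k+2) (m+k+1) * UP σ 1 k) * σ (k+1) := by
            rw [commU h k (by omega) (by omega) (by omega)]
        _ = (Gp σ m (k+1) * piProd σ (k+2) (m+(k+1))) * (UP σ 1 k * σ (k+1)) := by
            rw [show m+(k+1) = m+k+1 from by omega]; group
        _ = Gp σ m (k+1+1) * UP σ 1 (k+1) := by
            rw [Gp_succ σ m (k+1), UP_succ]; done

lemma moveD {k b : ℕ} (hkb : k ≤ b) (hbq : b + 1 ≤ q) :
    piProd σ 1 (k-1) ^ k * piProd σ 1 b = piProd σ 1 b * piProd σ 2 k ^ k := by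
  cases k with
  | zero => simp
  | succ t =>
      apply conj_pow
      have := Slem h (a := 1) (b := b) (by omega) (by omega) t 1 (by omega) (by omega)
      rw [show t+1-1 = t from by omega]
      exact this

lemma helper2 {k : ℕ} (hkq : k + 1 ≤ q) :
    piProd σ 1 k * piProd σ 2 k ^ k = piProd σ 1 (k-1) ^ k * piProd σ 1 k := by
  cases k with
  | zero => simp
  | succ t =>
      symm
      apply conj_pow
      have := Slem h (a := 1) (b := t+1) (by omega) (by omega) t 1 (by omega) (by omega)
      rw [show t+1-1 = t from by omega]
      exact this

lemma L2gen (hV : ∀ j, j + 2 ≤ q → UP σ 1 j * piProd σ 1 (j-1) ^ j = piProd σ 1 j ^ j) :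
    ∀ k, k + 1 ≤ q → piProd σ 1 (q-1) ^ k = Gp σ (q-k) k * piProd σ 1 (k-1) ^ k := by
  intro k
  induction k with
  | zero => intro _; simp [Gp_zero]
  | succ k ih =>
      intro hk
      have hδk := ih (by omega)
      have hm1 : 1 ≤ q - k - 1 := by omega
      set m := q - k - 1 with hm
      calc piProd σ 1 (q-1) ^ (k+1)
          = Gp σ (q-k) k * piProd σ 1 (k-1) ^ k * piProd σ 1 (q-1) := by
            rw [pow_succ, hδk]
        _ = Gp σ (q-k) k * (piProd σ 1 (q-1) * piProd σ 2 k ^ k) := by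
            rw [mul_assoc, moveD h (by omega) (by omega)]
        _ = Gp σ (m+1) k * (piProd σ (k+1) (m+k) * piProd σ 1 k * piProd σ 2 k ^ k) := by
            rw [show q - k = m + 1 from by omega, show q - 1 = m + k from by omega,
              piProd_split σ (a := 1) (c := k) (b := m+k) (by omega) (by omega)]
            done
        _ = Gp σ (m+1) k * piProd σ (k+1) (m+k) * (piProd σ 1 k * piProd σ 2 k ^ k) := by
            group
        _ = Gp σ m (k+1) * UP σ 1 k * (piProd σ 1 (k-1) ^ k * piProd σ 1 k) := by
            rw [XYU h k m hm1 (by omega), helper2 h (by omega)]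
        _ = Gp σ m (k+1) * (UP σ 1 k * piProd σ 1 (k-1) ^ k) * piProd σ 1 k := by group
        _ = Gp σ m (k+1) * piProd σ 1 k ^ k * piProd σ 1 k := by
            rw [hV k (by omega)]
        _ = Gp σ (q-(k+1)) (k+1) * piProd σ 1 ((k+1)-1) ^ (k+1) := by
            rw [show q-(k+1) = m from by omega, show (k+1)-1 = k from rfl, pow_succ]
            group

lemma Vlem : ∀ k, k + 1 ≤ q → UP σ 1 k * piProd σ 1 (k-1) ^ k = piProd σ 1 k ^ k := by
  intro k
  induction k using Nat.strong_induction_on with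
  | _ k ih =>
      intro hk
      have h' : IsBraidGensUpTo (k+1) σ := mono (by omega) h
      have key := L2gen h' (fun j hj => ih j (by omega) (by omega)) k (le_refl _)
      rw [show k+1-1 = k from rfl, show k+1-k = 1 from by omega, Gp_one_eq_UP] at key
      exact key.symm

end BraidAux

open BraidAux

/-- In `B_q`, for `1 ≤ r < q`, the full twist factors as
`(Π_1^{q-1})^q = (Π_1^r ⋯ Π_{q-r}^{q-1})(Π_1^{q-r} ⋯ Π_r^{q-1})(Π_{r+1}^{q-1})^{q-r}(Π_1^{r-1})^r`. -/
theorem stmt6 {G : Type*} [Group G] (q : ℕ) (σ : ℕ → G) (h : IsBraidGensUpTo q σ)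
    (r : ℕ) (hr : 1 ≤ r) (hrq : r < q) :
    (piProd σ 1 (q - 1)) ^ q =
      blockA σ q r * blockB σ q r *
        (piProd σ (r + 1) (q - 1)) ^ (q - r) * (piProd σ 1 (r - 1)) ^ r := by
  have hVall : ∀ j, j + 2 ≤ q → UP σ 1 j * piProd σ 1 (j-1) ^ j = piProd σ 1 j ^ j :=
    fun j hj => Vlem h j (by omega)
  have e1 := L2gen h hVall (q - r) (by omega)
  have e2 := L2gen h hVall r (by omega)
  rw [show q - (q - r) = r from by omega] at e1
  have e3 : piProd σ 1 (q - r - 1) ^ (q - r) * Gp σ (q - r) r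
      = Gp σ (q - r) r * piProd σ (r+1) (q-1) ^ (q - r) := by
    apply BraidAux.conj_pow
    have := CAword h (q - r - 1) (m := q - r) (k' := r) (by omega) (by omega)
    rw [show q - r - 1 + r = q - 1 from by omega] at this
    exact this
  have hA : blockA σ q r = Gp σ r (q - r) := rfl
  have hB : blockB σ q r = Gp σ (q - r) r := rfl
  calc piProd σ 1 (q-1) ^ q
      = piProd σ 1 (q-1) ^ (q - r) * piProd σ 1 (q-1) ^ r := by
        rw [← pow_add]; congr 1; omega
    _ = Gp σ r (q-r) * (piProd σ 1 (q-r-1) ^ (q-r) * Gp σ (q-r) r)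
          * piProd σ 1 (r-1) ^ r := by
        rw [e1, e2]; group
    _ = Gp σ r (q-r) * (Gp σ (q-r) r * piProd σ (r+1) (q-1) ^ (q-r))
          * piProd σ 1 (r-1) ^ r := by rw [e3]
    _ = blockA σ q r * blockB σ q r * piProd σ (r+1) (q-1) ^ (q-r)
          * piProd σ 1 (r-1) ^ r := by rw [hA, hB]; group
end

section
/- In the braid group B_q with 1 ≤ r < q, (Π_1^{q-r} Π_2^{q-r+1} ⋯ Π_r^{q-1}) (Π_1^{r-1})^r = (Π_1^{q-1})^r. -/
namespace Stmt10Aux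

variable {G : Type*} [Group G]

/-- Ascending product `σ_a σ_{a+1} ⋯ σ_{a+n-1}`. -/
def ascN (σ : ℕ → G) (a n : ℕ) : G := ((List.range' a n).map σ).prod

lemma ascN_zero (σ : ℕ → G) (a : ℕ) : ascN σ a 0 = 1 := rfl

lemma ascN_one (σ : ℕ → G) (a : ℕ) : ascN σ a 1 = σ a := by
  simp [ascN]

lemma ascN_front (σ : ℕ → G) (a n : ℕ) : ascN σ a (n + 1) = σ a * ascN σ (a + 1) n := by
  simp [ascN, List.range'_succ]

lemma ascN_back (σ : ℕ → G) (a n : ℕ) : ascN σ a (n + 1) = ascN σ a n * σ (a + n) := by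
  simp [ascN, List.range'_concat]

lemma piProd_empty (σ : ℕ → G) (a b : ℕ) (h : b + 1 ≤ a) : piProd σ a b = 1 := by
  unfold piProd
  rw [Nat.sub_eq_zero_of_le h]
  simp

lemma piProd_single (σ : ℕ → G) (a : ℕ) : piProd σ a a = σ a := by
  unfold piProd
  rw [show a + 1 - a = 1 from by omega]
  simp

lemma piProd_split (σ : ℕ → G) (a b c : ℕ) (h1 : a ≤ c + 1) (h2 : c ≤ b) :
    piProd σ a b = piProd σ (c + 1) b * piProd σ a c := by
  have h5 : List.range' a (c + 1 - a) ++ List.range' (c + 1) (b - c) = List.range' a (b + 1 - a) := by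
    have : List.range' a (c + 1 - a) 1 ++ List.range' (a + 1 * (c + 1 - a)) (b - c) 1
        = List.range' a ((c + 1 - a) + (b - c)) 1 := List.range'_append
    rw [show a + 1 * (c + 1 - a) = c + 1 from by omega,
        show (c + 1 - a) + (b - c) = b + 1 - a from by omega] at this
    exact this
  unfold piProd
  rw [show b + 1 - (c + 1) = b - c from by omega, ← h5, List.reverse_append, List.map_append,
    List.prod_append]

lemma piProd_top (σ : ℕ → G) (a b c : ℕ) (h1 : a ≤ b) (h2 : b = c + 1) :
    piProd σ a b = σ b * piProd σ a c := by
  subst h2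
  rw [piProd_split σ a (c + 1) c h1 (Nat.le_succ c), piProd_single]

lemma commute_piProd (σ : ℕ → G) (j a b : ℕ)
    (hc : ∀ i, a ≤ i → i ≤ b → Commute (σ j) (σ i)) :
    Commute (σ j) (piProd σ a b) := by
  apply Commute.list_prod_right
  intro x hx
  simp only [List.mem_map, List.mem_reverse, List.mem_range'_1] at hx
  obtain ⟨i, ⟨hi1, hi2⟩, rfl⟩ := hx
  exact hc i hi1 (by omega)

lemma commute_blockB (σ : ℕ → G) (j m r : ℕ)
    (hc : ∀ i, 1 ≤ i → i < m → Commute (σ j) (σ i)) :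
    Commute (σ j) (blockB σ m r) := by
  apply Commute.list_prod_right
  intro x hx
  simp only [List.mem_map, List.mem_range] at hx
  obtain ⟨k, hk, rfl⟩ := hx
  apply commute_piProd
  intro i hi1 hi2
  exact hc i (by omega) (by omega)

lemma blockB_self (σ : ℕ → G) (r : ℕ) : blockB σ r r = 1 := by
  unfold blockB
  apply List.prod_eq_one
  intro x hx
  simp only [List.mem_map, List.mem_range] at hx
  obtain ⟨k, hk, rfl⟩ := hx
  rw [Nat.sub_self]
  exact piProd_empty σ _ _ (by omega)

lemma blockB_succ (σ : ℕ → G) (m r : ℕ) (h : r ≤ m) :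
    blockB σ (m + 1) (r + 1) = blockB σ m r * piProd σ (r + 1) m := by
  unfold blockB
  rw [List.range_succ, List.map_append, List.prod_append]
  simp only [Nat.succ_sub_succ, List.map_cons, List.map_nil, List.prod_cons, List.prod_nil,
    mul_one]
  rw [show m - r + r = m from by omega]

/-- Key conjugation lemma: `Π_1^b σ_{j+1} = σ_j Π_1^b`. -/
lemma shift (σ : ℕ → G) {q : ℕ} (h : IsBraidGensUpTo q σ) (b j : ℕ)
    (hj : 1 ≤ j) (hjb : j + 1 ≤ b) (hb : b + 1 ≤ q) :
    piProd σ 1 b * σ (j + 1) = σ j * piProd σ 1 b := by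
  obtain ⟨k, rfl⟩ : ∃ k, j = k + 1 := ⟨j - 1, by omega⟩
  have hsplit : piProd σ 1 b = piProd σ (k + 3) b * (σ (k + 2) * (σ (k + 1) * piProd σ 1 k)) := by
    rw [piProd_split σ 1 b (k + 2) (by omega) (by omega),
        piProd_top σ 1 (k + 2) (k + 1) (by omega) rfl,
        piProd_top σ 1 (k + 1) k (by omega) rfl,
        show k + 2 + 1 = k + 3 from by omega]
  have hcomm1 : piProd σ 1 k * σ (k + 2) = σ (k + 2) * piProd σ 1 k := by
    have : Commute (σ (k + 2)) (piProd σ 1 k) := by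
      apply commute_piProd
      intro i hi1 hi2
      exact (h.1 i (k + 2) hi1 (by omega) (by omega)).symm
    exact this.eq.symm
  have hbr : σ (k + 1) * σ (k + 2) * σ (k + 1) = σ (k + 2) * σ (k + 1) * σ (k + 2) :=
    h.2 (k + 1) (by omega) (by omega)
  have hcomm2 : σ (k + 1) * piProd σ (k + 3) b = piProd σ (k + 3) b * σ (k + 1) := by
    have : Commute (σ (k + 1)) (piProd σ (k + 3) b) := by
      apply commute_piProd
      intro i hi1 hi2
      exact h.1 (k + 1) i (by omega) (by omega) (by omega)
    exact this.eq
  rw [hsplit]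
  simp only [mul_assoc]
  rw [hcomm1]
  have hbr' : σ (k + 2) * (σ (k + 1) * (σ (k + 2) * piProd σ 1 k))
      = σ (k + 1) * (σ (k + 2) * (σ (k + 1) * piProd σ 1 k)) := by
    rw [← mul_assoc, ← mul_assoc, ← hbr, mul_assoc, mul_assoc]
  rw [hbr', ← mul_assoc, ← hcomm2, mul_assoc]

lemma shift_ascN (σ : ℕ → G) {q : ℕ} (h : IsBraidGensUpTo q σ) :
    ∀ n a b, 1 ≤ a → a + n ≤ b → b + 1 ≤ q →
      piProd σ 1 b * ascN σ (a + 1) n = ascN σ a n * piProd σ 1 b := by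
  intro n
  induction n with
  | zero => intro a b _ _ _; simp [ascN_zero]
  | succ n ih =>
    intro a b ha hab hb
    rw [ascN_front, ascN_front, ← mul_assoc, shift σ h b a ha (by omega) hb, mul_assoc,
        ih (a + 1) b (by omega) (by omega) hb, ← mul_assoc]

lemma pow_shift (σ : ℕ → G) {q : ℕ} (h : IsBraidGensUpTo q σ) :
    ∀ t u, u + t + 2 ≤ q →
      (piProd σ 1 (u + t + 1)) ^ (t + 1)
        = ascN σ (u + 1) (t + 1) * (piProd σ 1 (u + t)) ^ (t + 1) := by
  intro t
  induction t with
  | zero =>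
    intro u hu
    simp only [Nat.add_zero, Nat.zero_add, pow_one]
    rw [piProd_top σ 1 (u + 1) u (by omega) rfl, ascN_one]
  | succ t ih =>
    intro u hu
    have h1 := ih (u + 1) (by omega)
    rw [show u + 1 + t + 1 = u + t + 2 from by omega,
        show u + 1 + t = u + t + 1 from by omega] at h1
    rw [show u + (t + 1) + 1 = u + t + 2 from by omega,
        show u + (t + 1) = u + t + 1 from by omega]
    rw [pow_succ' (piProd σ 1 (u + t + 2)) (t + 1), h1, ← mul_assoc,
        shift_ascN σ h (t + 1) (u + 1) (u + t + 2) (by omega) (by omega) (by omega),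
        piProd_top σ 1 (u + t + 2) (u + t + 1) (by omega) (by omega),
        ascN_back σ (u + 1) (t + 1), show u + 1 + (t + 1) = u + t + 2 from by omega,
        pow_succ' (piProd σ 1 (u + t + 1)) (t + 1)]
    simp only [mul_assoc]

lemma blockB_step (σ : ℕ → G) {q : ℕ} (h : IsBraidGensUpTo q σ) :
    ∀ r s, s + r + 1 ≤ q →
      blockB σ (s + r + 1) r = ascN σ (s + 1) r * blockB σ (s + r) r := by
  intro r
  induction r with
  | zero =>
    intro s _
    simp [blockB, ascN_zero]
  | succ r ih =>
    intro s hs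
    have e1 : blockB σ (s + (r + 1) + 1) (r + 1)
        = blockB σ (s + r + 1) r * piProd σ (r + 1) (s + r + 1) := by
      rw [show s + (r + 1) + 1 = s + r + 1 + 1 from by omega]
      exact blockB_succ σ (s + r + 1) r (by omega)
    have hc : σ (s + r + 1) * blockB σ (s + r) r = blockB σ (s + r) r * σ (s + r + 1) := by
      have : Commute (σ (s + r + 1)) (blockB σ (s + r) r) := by
        apply commute_blockB
        intro i hi1 hi2
        exact (h.1 i (s + r + 1) hi1 (by omega) (by omega)).symm
      exact this.eq
    rw [e1, ih s (by omega),
        piProd_top σ (r + 1) (s + r + 1) (s + r) (by omega) rfl,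
        ascN_back σ (s + 1) r, show s + 1 + r = s + r + 1 from by omega,
        show s + (r + 1) = s + r + 1 from by omega, blockB_succ σ (s + r) r (by omega)]
    simp only [mul_assoc]
    congr 1
    rw [← mul_assoc, ← hc, mul_assoc]

end Stmt10Aux

open Stmt10Aux in
/-- In `B_q`, for `1 ≤ r < q`,
`(Π_1^{q-r} Π_2^{q-r+1} ⋯ Π_r^{q-1})(Π_1^{r-1})^r = (Π_1^{q-1})^r`. -/
theorem stmt10 {G : Type*} [Group G] (q : ℕ) (σ : ℕ → G) (h : IsBraidGensUpTo q σ)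
    (r : ℕ) (hr : 1 ≤ r) (hrq : r < q) :
    blockB σ q r * (piProd σ 1 (r - 1)) ^ r = (piProd σ 1 (q - 1)) ^ r := by
  obtain ⟨t, rfl⟩ : ∃ t, r = t + 1 := ⟨r - 1, by omega⟩
  have key : ∀ n, t + 1 + n ≤ q →
      blockB σ (t + 1 + n) (t + 1) * (piProd σ 1 t) ^ (t + 1)
        = (piProd σ 1 (t + n)) ^ (t + 1) := by
    intro n
    induction n with
    | zero =>
      intro _
      simp only [Nat.add_zero]
      rw [blockB_self, one_mul]
    | succ n ih =>
      intro hn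
      have e := blockB_step σ h (t + 1) n (by omega)
      rw [show t + 1 + (n + 1) = n + (t + 1) + 1 from by omega, e,
          show n + (t + 1) = t + 1 + n from by omega, mul_assoc, ih (by omega)]
      have d := pow_shift σ h t n (by omega)
      rw [show n + t + 1 = t + (n + 1) from by omega,
          show n + t = t + n from by omega] at d
      exact d.symm
  have hk := key (q - (t + 1)) (by omega)
  rw [show t + 1 + (q - (t + 1)) = q from by omega,
      show t + (q - (t + 1)) = q - 1 from by omega] at hk
  rw [show t + 1 - 1 = t from by omega]
  exact hk
end

section
/- Let q > 2, 1 ≤ m < q, gcd(q,m) = 1, and q − m = 1, and suppose (s,t,u,v) ∈ ℤ⁴ satisfies the system: qs − mt = x₁, qu − mv = x₂, mu − mv = x₃, −ms + mt = x₄ (the k = 0 specialization), where (x₁,x₂,x₃,x₄) is one of ±(q, m−q, m−q, m−q), ±(q, q−m, m−q, q−m), ±(m−q, m−q, m−q, q), ±(m−q, q−m, m−q, −q). Then m divides x₃, and since x₃ = ±(m−q) = ∓1, it follows that m = 1 and hence q = 2, a contradiction; therefore no integer solution exists. -/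
lemma stmt17_aux (q c : ℤ) (hq : 2 < q) (hd : q - 1 ∣ c)
    (hc : c = 1 ∨ c = -1 ∨ c = 2 * q - 1 ∨ c = 1 - 2 * q) : False := by
  have h2 : q - 1 ∣ 2 * (q - 1) := ⟨2, by ring⟩
  have hone : q - 1 ∣ 1 := by
    rcases hc with rfl | rfl | rfl | rfl
    · exact hd
    · exact dvd_neg.mp hd
    · have h := dvd_sub hd h2
      have : 2 * q - 1 - 2 * (q - 1) = 1 := by ring
      rwa [this] at h
    · have h := dvd_add hd h2
      have : 1 - 2 * q + 2 * (q - 1) = -1 := by ring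
      rw [this] at h
      exact dvd_neg.mp h
  have := Int.le_of_dvd one_pos hone
  omega

/-- For `q > 2`, `1 ≤ m < q`, `gcd(q,m) = 1`, there are no integers `s,t,u,v` with
`sv - tu = ±1` solving `qs - mt = x₁`, `qu - mv = x₂`, `mu - mv = x₃`, `-ms + mt = x₄`,
where `(x₁,x₂,x₃,x₄)` is any of `±(q, m-q, m-q, m-q)`, `±(q, q-m, m-q, q-m)`,
`±(m-q, m-q, m-q, q)`, `±(m-q, q-m, m-q, -q)`. -/
theorem stmt17 (q m : ℤ) (hq : 2 < q) (hm : 1 ≤ m) (hmq : m < q)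
    (hgcd : Int.gcd q m = 1) :
    ¬ ∃ (s t u v x₁ x₂ x₃ x₄ : ℤ),
      (s * v - t * u = 1 ∨ s * v - t * u = -1) ∧
      ((x₁, x₂, x₃, x₄) = (q, m - q, m - q, m - q) ∨
       (x₁, x₂, x₃, x₄) = (-q, q - m, q - m, q - m) ∨
       (x₁, x₂, x₃, x₄) = (q, q - m, m - q, q - m) ∨
       (x₁, x₂, x₃, x₄) = (-q, m - q, q - m, m - q) ∨
       (x₁, x₂, x₃, x₄) = (m - q, m - q, m - q, q) ∨
       (x₁, x₂, x₃, x₄) = (q - m, q - m, q - m, -q) ∨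
       (x₁, x₂, x₃, x₄) = (m - q, q - m, m - q, -q) ∨
       (x₁, x₂, x₃, x₄) = (q - m, m - q, q - m, q)) ∧
      q * s - m * t = x₁ ∧ q * u - m * v = x₂ ∧
      m * u - m * v = x₃ ∧ -m * s + m * t = x₄ := by
  rintro ⟨s, t, u, v, x₁, x₂, x₃, x₄, hdet, hx, h1, h2, h3, h4⟩
  simp only [Prod.mk.injEq] at hx
  -- m divides x₃
  have hd3 : m ∣ x₃ := ⟨u - v, by linarith [mul_sub m u v]⟩
  -- from the case list, x₃ = m - q or q - m, hence m ∣ q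
  have hdq : m ∣ q := by
    have hmq' : m ∣ m - q ∨ m ∣ q - m := by
      rcases hx with ⟨_,_,h,_⟩|⟨_,_,h,_⟩|⟨_,_,h,_⟩|⟨_,_,h,_⟩|⟨_,_,h,_⟩|⟨_,_,h,_⟩|⟨_,_,h,_⟩|⟨_,_,h,_⟩ <;>
        [exact Or.inl (h ▸ hd3); exact Or.inr (h ▸ hd3); exact Or.inl (h ▸ hd3);
         exact Or.inr (h ▸ hd3); exact Or.inl (h ▸ hd3); exact Or.inr (h ▸ hd3);
         exact Or.inl (h ▸ hd3); exact Or.inr (h ▸ hd3)]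
    rcases hmq' with h | h
    · have := dvd_sub (dvd_refl m) h
      simpa using this
    · have := dvd_add (dvd_refl m) h
      simpa using this
  have hm1 : m = 1 := by
    have hg : m ∣ (Int.gcd q m : ℤ) := Int.dvd_coe_gcd hdq dvd_rfl
    rw [hgcd] at hg
    have := Int.le_of_dvd one_pos hg
    omega
  subst hm1
  -- (q - 1) * s = x₁ + x₄
  have hkey : q - 1 ∣ x₁ + x₄ := ⟨s, by linarith [mul_comm (q - 1) s, mul_sub s q 1]⟩
  have hsum : x₁ + x₄ = 1 ∨ x₁ + x₄ = -1 ∨ x₁ + x₄ = 2 * q - 1 ∨ x₁ + x₄ = 1 - 2 * q := by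
    rcases hx with ⟨e1,e2,e3,e4⟩|⟨e1,e2,e3,e4⟩|⟨e1,e2,e3,e4⟩|⟨e1,e2,e3,e4⟩|⟨e1,e2,e3,e4⟩|⟨e1,e2,e3,e4⟩|⟨e1,e2,e3,e4⟩|⟨e1,e2,e3,e4⟩ <;>
      subst e1 <;> subst e4 <;> omega
  exact stmt17_aux q (x₁ + x₄) hq hkey hsum
end
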